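/- Let A ∈ S_d(ℝ) with spectral decomposition A = UDUᵀ (U orthogonal, D diagonal). Define A⁺ = UD⁺Uᵀ where D⁺ replaces each diagonal entry σᵢ by max(σᵢ, 0). Then A⁺ is the nearest positive semidefinite matrix to A in Frobenius norm, i.e., ‖A - A⁺‖_F ≤ ‖A - M‖_F for all M ∈ S_d(ℝ)⁺₀, with equality only for M = A⁺. -/

import Mathlib

/-!
Put `A⁻ = A⁺ - A = U diag(max(-σᵢ, 0)) Uᵀ`. It is positive semidefinite and `A⁻ A⁺ = 0`, so for
positive semidefinite `M` we get `⟨A - A⁺, A⁺ - M⟩_F = tr (A⁻ M) ≥ 0`. Expanding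
`‖A - M‖²_F = ‖(A - A⁺) + (A⁺ - M)‖²_F` then gives `‖A - M‖²_F ≥ ‖A - A⁺‖²_F + ‖A⁺ - M‖²_F`,
which contains both the inequality and the equality case.
-/

open Matrix

/-- The Frobenius norm of a real matrix, `‖A‖_F = √(tr (Aᵀ A))`. -/
noncomputable def frobeniusNorm {d : ℕ} (A : Matrix (Fin d) (Fin d) ℝ) : ℝ :=
  Real.sqrt (Aᵀ * A).trace

namespace Matrix

variable {n : Type*} [Fintype n]

open scoped MatrixOrder ComplexOrder in
theorem PosSemidef.trace_mul_nonneg {𝕜 : Type*} [RCLike 𝕜] {A B : Matrix n n 𝕜}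
    (hA : A.PosSemidef) (hB : B.PosSemidef) : 0 ≤ (A * B).trace := by
  classical
  obtain ⟨S, rfl⟩ := CStarAlgebra.nonneg_iff_eq_star_mul_self.mp hA.nonneg
  rw [star_eq_conjTranspose, Matrix.mul_assoc, trace_mul_comm]
  exact (hB.mul_mul_conjTranspose_same S).trace_nonneg

variable [DecidableEq n]

lemma conj_diagonal_mul_conj_diagonal {U : Matrix n n ℝ} (hU : Uᵀ * U = 1) (a b : n → ℝ) :
    U * diagonal a * Uᵀ * (U * diagonal b * Uᵀ) = U * diagonal (a * b) * Uᵀ := by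
  calc U * diagonal a * Uᵀ * (U * diagonal b * Uᵀ)
        = U * diagonal a * (Uᵀ * U) * diagonal b * Uᵀ := by simp only [Matrix.mul_assoc]
    _ = U * (diagonal a * diagonal b) * Uᵀ := by rw [hU, Matrix.mul_one, Matrix.mul_assoc U]
    _ = U * diagonal (a * b) * Uᵀ := by rw [diagonal_mul_diagonal]; rfl

lemma transpose_conj_diagonal (U : Matrix n n ℝ) (a : n → ℝ) :
    (U * diagonal a * Uᵀ)ᵀ = U * diagonal a * Uᵀ := by
  simp [Matrix.mul_assoc]

lemma posSemidef_conj_diagonal (U : Matrix n n ℝ) {a : n → ℝ} (ha : 0 ≤ a) :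
    (U * diagonal a * Uᵀ).PosSemidef := by
  simpa [conjTranspose_eq_transpose_of_trivial] using
    (PosSemidef.diagonal ha).mul_mul_conjTranspose_same U

lemma trace_sub_posPart_mul_nonneg {U M : Matrix n n ℝ} (hU : Uᵀ * U = 1) (σ : n → ℝ)
    (hM : M.PosSemidef) :
    0 ≤ ((U * diagonal σ * Uᵀ - U * diagonal (fun i => max (σ i) 0) * Uᵀ)ᵀ *
      (U * diagonal (fun i => max (σ i) 0) * Uᵀ - M)).trace := by
  set τ : n → ℝ := fun i => max (σ i) 0
  have hneg : U * diagonal σ * Uᵀ - U * diagonal τ * Uᵀ = -(U * diagonal (τ - σ) * Uᵀ) := by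
    rw [show diagonal (τ - σ) = diagonal τ - diagonal σ from (diagonal_sub τ σ).symm]
    noncomm_ring
  have horth : (τ - σ) * τ = 0 := by
    ext i; simp only [τ, Pi.mul_apply, Pi.sub_apply, Pi.zero_apply]
    rcases le_total (σ i) 0 with h | h <;> simp [h]
  have hnonneg : 0 ≤ τ - σ := fun i => by simp [τ]
  rw [hneg, transpose_neg, transpose_conj_diagonal, neg_mul, mul_sub,
    conj_diagonal_mul_conj_diagonal hU, horth, diagonal_zero', Matrix.mul_zero, Matrix.zero_mul,
    zero_sub, neg_neg]
  exact (posSemidef_conj_diagonal U hnonneg).trace_mul_nonneg hM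

end Matrix

section FrobeniusNorm

variable {d : ℕ}

lemma frobeniusNorm_nonneg (X : Matrix (Fin d) (Fin d) ℝ) : 0 ≤ frobeniusNorm X :=
  Real.sqrt_nonneg _

lemma frobeniusNorm_sq (X : Matrix (Fin d) (Fin d) ℝ) : frobeniusNorm X ^ 2 = (Xᵀ * X).trace :=
  Real.sq_sqrt <| by
    simpa [conjTranspose_eq_transpose_of_trivial] using
      (posSemidef_conjTranspose_mul_self X).trace_nonneg

lemma frobeniusNorm_eq_zero_iff {X : Matrix (Fin d) (Fin d) ℝ} : frobeniusNorm X = 0 ↔ X = 0 := by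
  rw [← sq_eq_zero_iff (M₀ := ℝ), frobeniusNorm_sq, ← conjTranspose_eq_transpose_of_trivial,
    trace_conjTranspose_mul_self_eq_zero_iff]

lemma frobeniusNorm_sub_sq_add_sq_le {A P M : Matrix (Fin d) (Fin d) ℝ}
    (h : 0 ≤ ((A - P)ᵀ * (P - M)).trace) :
    frobeniusNorm (A - P) ^ 2 + frobeniusNorm (P - M) ^ 2 ≤ frobeniusNorm (A - M) ^ 2 := by
  have hexpand : (A - M)ᵀ * (A - M) = (A - P)ᵀ * (A - P) + (A - P)ᵀ * (P - M)
      + ((A - P)ᵀ * (P - M))ᵀ + (P - M)ᵀ * (P - M) := by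
    simp only [transpose_mul, transpose_transpose, transpose_sub]; noncomm_ring
  simp only [frobeniusNorm_sq, hexpand, trace_add, trace_transpose]
  linarith

end FrobeniusNorm

theorem semidefinite_projection_general {d : ℕ}
    (A U : Matrix (Fin d) (Fin d) ℝ) (σ : Fin d → ℝ)
    (hU₁ : Uᵀ * U = 1)
    (hAdecomp : A = U * Matrix.diagonal σ * Uᵀ)
    (Aplus : Matrix (Fin d) (Fin d) ℝ)
    (hAplus : Aplus = U * Matrix.diagonal (fun i => max (σ i) 0) * Uᵀ) :
    ∀ M : Matrix (Fin d) (Fin d) ℝ, M.PosSemidef →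
      frobeniusNorm (A - Aplus) ≤ frobeniusNorm (A - M) ∧
      (frobeniusNorm (A - Aplus) = frobeniusNorm (A - M) → M = Aplus) := by
  intro M hM
  have hpyth : frobeniusNorm (A - Aplus) ^ 2 + frobeniusNorm (Aplus - M) ^ 2 ≤
      frobeniusNorm (A - M) ^ 2 := by
    apply frobeniusNorm_sub_sq_add_sq_le
    rw [hAdecomp, hAplus]
    exact trace_sub_posPart_mul_nonneg hU₁ σ hM
  have hsq := sq_nonneg (frobeniusNorm (Aplus - M))
  refine ⟨(sq_le_sq₀ (frobeniusNorm_nonneg _) (frobeniusNorm_nonneg _)).mp (by linarith),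
    fun heq => ?_⟩
  have hzero : frobeniusNorm (Aplus - M) = 0 :=
    pow_eq_zero_iff two_ne_zero |>.mp (le_antisymm (by rw [heq] at hpyth; linarith) hsq)
  exact (sub_eq_zero.mp (frobeniusNorm_eq_zero_iff.mp hzero)).symm

theorem semidefinite_projection {d : ℕ}
    (A U : Matrix (Fin d) (Fin d) ℝ) (σ : Fin d → ℝ)
    (hA : Aᵀ = A) (hU₁ : Uᵀ * U = 1) (hU₂ : U * Uᵀ = 1)
    (hAdecomp : A = U * Matrix.diagonal σ * Uᵀ)
    (Aplus : Matrix (Fin d) (Fin d) ℝ)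
    (hAplus : Aplus = U * Matrix.diagonal (fun i => max (σ i) 0) * Uᵀ) :
    ∀ M : Matrix (Fin d) (Fin d) ℝ, M.PosSemidef →
      frobeniusNorm (A - Aplus) ≤ frobeniusNorm (A - M) ∧
      (frobeniusNorm (A - Aplus) = frobeniusNorm (A - M) → M = Aplus) :=
  semidefinite_projection_general A U σ hU₁ hAdecomp Aplus hAplus
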